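/- Let x : ℕ → ℝ be a sequence with values in [0,1) and let L = liminf_{k→∞} x(k). Fix n ∈ ℕ and suppose the set T = { m/10^n : m ∈ ℕ, and for every N there exists k ≥ N with x(k) < m/10^n and m/10^n − x(k) ≤ 10^{−n} } is nonempty, with least element s⁺. Then s⁺ − 10^{−n} ≤ L ≤ s⁺. -/

import Mathlib

theorem stmt_0 (x : ℕ → ℝ) (hx : ∀ k, 0 ≤ x k ∧ x k < 1) (n : ℕ)
    (L : ℝ) (hL : L = Filter.liminf x Filter.atTop)
    (T : Set ℝ)
    (hT : T = {t : ℝ | ∃ m : ℕ, t = (m : ℝ) / 10 ^ n ∧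
      ∀ N : ℕ, ∃ k ≥ N, x k < t ∧ t - x k ≤ (10 : ℝ) ^ (-(n : ℤ))})
    (s : ℝ) (hs : IsLeast T s) :
    s - (10 : ℝ) ^ (-(n : ℤ)) ≤ L ∧ L ≤ s := by
  have hP : (0:ℝ) < 10 ^ n := by positivity
  have hpw : (10 : ℝ) ^ (-(n : ℤ)) = ((10:ℝ) ^ n)⁻¹ := by
    rw [zpow_neg, zpow_natCast]
  have hc : (10:ℝ) ^ n * ((10:ℝ) ^ n)⁻¹ = 1 := mul_inv_cancel₀ hP.ne'
  have hb0 : Filter.IsBoundedUnder (· ≥ ·) Filter.atTop x :=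
    Filter.isBoundedUnder_of ⟨0, fun k => (hx k).1⟩
  have hb1 : Filter.IsBoundedUnder (· ≤ ·) Filter.atTop x :=
    Filter.isBoundedUnder_of ⟨1, fun k => (hx k).2.le⟩
  have hcb : Filter.IsCoboundedUnder (· ≥ ·) Filter.atTop x :=
    hb1.isCoboundedUnder_ge
  obtain ⟨m, hsm, hfreq⟩ := hT ▸ hs.1
  have hLs : L ≤ s := by
    rw [hL]
    refine Filter.liminf_le_of_frequently_le ?_ hb0
    rw [Filter.frequently_atTop]
    intro N
    obtain ⟨k, hk, h1, _⟩ := hfreq N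
    exact ⟨k, hk, h1.le⟩
  refine ⟨?_, hLs⟩
  have hL0 : 0 ≤ L := by
    rw [hL]
    exact Filter.le_liminf_of_le hcb (Filter.Eventually.of_forall fun k => (hx k).1)
  have hLP0 : 0 ≤ L * 10 ^ n := by positivity
  -- it suffices to find t' ∈ T with t' ≤ L + 10^{-n}
  suffices h : ∃ t' ∈ T, t' ≤ L + (10 : ℝ) ^ (-(n : ℤ)) by
    obtain ⟨t', ht'T, ht'⟩ := h
    have := hs.2 ht'T
    linarith
  by_cases hB : ∃ᶠ k in Filter.atTop, x k < L
  · -- case B: frequently x k < L; take t' = ⌈L·10^n⌉₊ / 10^n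
    set m' := ⌈L * 10 ^ n⌉₊ with hm'
    refine ⟨(m' : ℝ) / 10 ^ n, ?_, ?_⟩
    · rw [hT]
      refine ⟨m', rfl, ?_⟩
      have hle : L ≤ (m' : ℝ) / 10 ^ n := by
        rw [le_div_iff₀ hP]
        exact Nat.le_ceil _
      have hlt : (m' : ℝ) / 10 ^ n - (10 : ℝ) ^ (-(n : ℤ)) < L := by
        rw [hpw]
        have := Nat.ceil_lt_add_one hLP0
        rw [div_sub' hP.ne', div_lt_iff₀ hP]
        push_cast
        nlinarith [hc]
      have hev : ∀ᶠ k in Filter.atTop,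
          (m' : ℝ) / 10 ^ n - (10 : ℝ) ^ (-(n : ℤ)) < x k := by
        rw [hL] at hlt
        exact Filter.eventually_lt_of_lt_liminf hlt hb0
      have hfr := hB.and_eventually hev
      rw [Filter.frequently_atTop] at hfr
      intro N
      obtain ⟨k, hk, h1, h2⟩ := hfr N
      exact ⟨k, hk, lt_of_lt_of_le h1 hle, by linarith⟩
    · have hlt : (m' : ℝ) / 10 ^ n - (10 : ℝ) ^ (-(n : ℤ)) < L := by
        rw [hpw]
        have := Nat.ceil_lt_add_one hLP0
        rw [div_sub' hP.ne', div_lt_iff₀ hP]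
        push_cast
        nlinarith [hc]
      linarith
  · -- case A: eventually L ≤ x k; take t' = (⌊L·10^n⌋₊ + 1) / 10^n
    rw [Filter.not_frequently] at hB
    have hevL : ∀ᶠ k in Filter.atTop, L ≤ x k := by
      filter_upwards [hB] with k hk
      exact not_lt.mp hk
    set m' := ⌊L * 10 ^ n⌋₊ + 1 with hm'
    have hgt : L < (m' : ℝ) / 10 ^ n := by
      rw [lt_div_iff₀ hP]
      push_cast [hm']
      exact Nat.lt_floor_add_one _
    have hle : (m' : ℝ) / 10 ^ n - (10 : ℝ) ^ (-(n : ℤ)) ≤ L := by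
      rw [hpw]
      have := Nat.floor_le hLP0
      rw [div_sub' hP.ne', div_le_iff₀ hP]
      push_cast [hm']
      nlinarith [hc]
    refine ⟨(m' : ℝ) / 10 ^ n, ?_, by linarith⟩
    rw [hT]
    refine ⟨m', rfl, ?_⟩
    have hfr : ∃ᶠ k in Filter.atTop, x k < (m' : ℝ) / 10 ^ n := by
      rw [hL] at hgt
      exact Filter.frequently_lt_of_liminf_lt hcb hgt
    have hfr2 := hfr.and_eventually hevL
    rw [Filter.frequently_atTop] at hfr2
    intro N
    obtain ⟨k, hk, h1, h2⟩ := hfr2 N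
    exact ⟨k, hk, h1, by linarith⟩
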